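/- arXiv:1801.04502 — 3 statements merged into one kernel-verified Lean document; each statement's English description precedes it below -/
import Mathlib

section
/- There exists a saturated equiangular set of 28 lines in R^14 with common angle arccos(1/5); that is, there is a set X of 28 unit vectors in R^14, pairwise non-parallel, such that |⟨v,w⟩| = 1/5 for all distinct v,w ∈ X, and there is no unit vector u in the linear span of X with u ∉ X ∪ (−X) satisfying |⟨u,x⟩| = 1/5 for all x ∈ X. -/
/-!
Let `S` be the symmetric conference matrix of order 26 built from two circulants of order 13,
so that `S² = 25`. The matrix `Γ = 1 + S / 5` then satisfies `Γ² = 2 Γ`, hence 26 unit vectors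
`x i` with Gram matrix `Γ` form a tight frame with bound 2 of a space `W` of dimension
`tr Γ / 2 = 13`. For a unit vector `e ⊥ W` and an integer eigenvector `v` of `S` for the
eigenvalue 5 with entries `±1`, the vector `(∑ v i • x i) / 10 ± (√12 / 5) • e` is a unit vector
at angle `1/5` with every `x i`; we add two such lines, for `v = 1` and for a sign vector `ε`
with six entries `-1`.

If a unit vector `u = w + c • e` with `w ∈ W` were at angle `1/5` with all 28 lines, the frame
identity `∑ ⟪w, x i⟫² = 2 ‖w‖²` forces `‖w‖² = 13/25`, so `c = ±√12 / 5`. Then the inner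
products of `u` with the two extra lines differ by `24/25` up to `∑ (1 - ε i) ⟪w, x i⟫ / 10`,
which is at most `6/25` in absolute value, while both must be `±1/5`. The 28 vectors span at
most `13 + 1` dimensions, so they can be moved isometrically into `ℝ¹⁴`.
-/

open Module Submodule Set Matrix Finset
open scoped InnerProductSpace

variable {E : Type*} [NormedAddCommGroup E] [InnerProductSpace ℝ E]

section TightFrame

variable {ι : Type*} [Fintype ι]

def IsTightFrame (x : ι → E) (A : ℝ) : Prop :=
  ∀ w ∈ span ℝ (range x), ∑ i, ⟪w, x i⟫_ℝ • x i = A • w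

theorem isTightFrame_of_gram_mul_self {x : ι → E} {A : ℝ}
    (h : gram ℝ x * gram ℝ x = A • gram ℝ x) : IsTightFrame x A := by
  intro w hw
  induction hw using span_induction with
  | mem _ hv =>
    obtain ⟨j, rfl⟩ := hv
    set v := ∑ i, ⟪x j, x i⟫_ℝ • x i - A • x j
    have horth (k : ι) : ⟪v, x k⟫_ℝ = 0 := by
      have := congrFun (congrFun h j) k
      simp only [mul_apply, gram_apply, Matrix.smul_apply, smul_eq_mul] at this
      simp only [v, inner_sub_left, sum_inner, real_inner_smul_left, this, sub_self]
    have : ⟪v, v⟫_ℝ = 0 :=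
      calc ⟪v, v⟫_ℝ = ⟪v, ∑ i, ⟪x j, x i⟫_ℝ • x i - A • x j⟫_ℝ := rfl
        _ = 0 := by simp only [inner_sub_right, inner_sum, real_inner_smul_right, horth,
          mul_zero, sum_const_zero, sub_self]
    exact sub_eq_zero.1 (inner_self_eq_zero.1 this)
  | zero => simp
  | add v w _ _ hv hw => simp only [inner_add_left, add_smul, sum_add_distrib, hv, hw, smul_add]
  | smul a v _ hv =>
    simp only [real_inner_smul_left, mul_smul, ← smul_sum, hv, smul_comm a A]

theorem IsTightFrame.sum_inner_sq {x : ι → E} {A : ℝ} (hx : IsTightFrame x A) {w : E}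
    (hw : w ∈ span ℝ (range x)) : ∑ i, ⟪w, x i⟫_ℝ ^ 2 = A * ‖w‖ ^ 2 := by
  have := congrArg (⟪w, ·⟫_ℝ) (hx w hw)
  simpa only [inner_sum, real_inner_smul_right, ← sq, real_inner_self_eq_norm_sq] using this

theorem IsTightFrame.mul_finrank_span {x : ι → E} {A : ℝ} (hx : IsTightFrame x A) :
    A * finrank ℝ (span ℝ (range x)) = ∑ i, ‖x i‖ ^ 2 := by
  set W := span ℝ (range x)
  have : FiniteDimensional ℝ W := FiniteDimensional.span_of_finite ℝ (finite_range x)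
  let b := stdOrthonormalBasis ℝ W
  have parseval (i : ι) : ‖x i‖ ^ 2 = ∑ j, ⟪(b j : E), x i⟫_ℝ ^ 2 := by
    let xi : W := ⟨x i, subset_span (mem_range_self i)⟩
    have := b.sum_inner_mul_inner xi xi
    simp only [coe_inner, real_inner_self_eq_norm_sq] at this
    rw [← this]
    exact sum_congr rfl fun j _ => by rw [real_inner_comm, sq]
  calc A * finrank ℝ W = A * ∑ j, ‖(b j : E)‖ ^ 2 := by
        have hb (j : Fin (finrank ℝ W)) : ‖(b j : E)‖ = 1 := b.orthonormal.1 j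
        simp [hb]
    _ = ∑ j, ∑ i, ⟪(b j : E), x i⟫_ℝ ^ 2 := by
        rw [mul_sum]
        exact sum_congr rfl fun j _ => (hx.sum_inner_sq (b j).2).symm
    _ = ∑ i, ‖x i‖ ^ 2 := by
        rw [sum_comm]
        exact sum_congr rfl fun i _ => (parseval i).symm

end TightFrame

def IsSaturatedEquiangularSet (X : Finset E) (α : ℝ) : Prop :=
  (∀ v ∈ X, ‖v‖ = 1) ∧
  (∀ v ∈ X, ∀ w ∈ X, v ≠ w → |⟪v, w⟫_ℝ| = α) ∧
  ¬ ∃ u : E, ‖u‖ = 1 ∧ u ∈ span ℝ (X : Set E) ∧ u ∉ (X : Set E) ∪ -(X : Set E) ∧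
    ∀ x ∈ X, |⟪u, x⟫_ℝ| = α

theorem injective_of_abs_inner_eq {κ : Type*} {v : κ → E} {α : ℝ} (hα : α ≠ 1)
    (hnorm : ∀ k, ‖v k‖ = 1) (hangle : ∀ k l, k ≠ l → |⟪v k, v l⟫_ℝ| = α) :
    Function.Injective v := by
  intro k l hkl
  by_contra hne
  have := hangle k l hne
  rw [hkl, real_inner_self_eq_norm_sq, hnorm, one_pow, abs_one] at this
  exact hα this.symm

theorem isSaturatedEquiangularSet_image_univ {κ : Type*} [Fintype κ] [DecidableEq E]
    {v : κ → E} {α : ℝ} (hnorm : ∀ k, ‖v k‖ = 1)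
    (hangle : ∀ k l, k ≠ l → |⟪v k, v l⟫_ℝ| = α)
    (hsat : ∀ u ∈ span ℝ (range v), ‖u‖ = 1 → ∃ k, |⟪u, v k⟫_ℝ| ≠ α) :
    IsSaturatedEquiangularSet (univ.image v) α := by
  simp only [IsSaturatedEquiangularSet, Finset.mem_image, Finset.mem_univ, true_and,
    forall_exists_index, forall_apply_eq_imp_iff, coe_image, coe_univ, image_univ]
  refine ⟨hnorm, fun k l hkl => hangle k l fun h => hkl (h ▸ rfl), ?_⟩
  rintro ⟨u, hu, huspan, -, hux⟩
  obtain ⟨k, hk⟩ := hsat u huspan hu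
  exact hk (hux k)

section Image

variable {F : Type*} [NormedAddCommGroup F] [InnerProductSpace ℝ F] [DecidableEq F]
  {X : Finset E} (g : E →ₗ[ℝ] F)

theorem card_image_of_inner_map_map
    (hg : ∀ v ∈ span ℝ (X : Set E), ∀ w ∈ span ℝ (X : Set E), ⟪g v, g w⟫_ℝ = ⟪v, w⟫_ℝ) :
    (X.image g).card = X.card := by
  refine card_image_of_injOn fun v hv w hw hvw => ?_
  have hd : v - w ∈ span ℝ (X : Set E) := sub_mem (subset_span hv) (subset_span hw)
  have := hg _ hd _ hd
  rwa [map_sub, hvw, sub_self, inner_zero_left, eq_comm, inner_self_eq_zero, sub_eq_zero] at this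

theorem IsSaturatedEquiangularSet.image {α : ℝ} (hX : IsSaturatedEquiangularSet X α)
    (hg : ∀ v ∈ span ℝ (X : Set E), ∀ w ∈ span ℝ (X : Set E), ⟪g v, g w⟫_ℝ = ⟪v, w⟫_ℝ) :
    IsSaturatedEquiangularSet (X.image g) α := by
  obtain ⟨hnorm, hangle, hsat⟩ := hX
  have hmem {v : E} (hv : v ∈ X) : v ∈ span ℝ (X : Set E) := subset_span hv
  have hnorm_map {v : E} (hv : v ∈ span ℝ (X : Set E)) : ‖g v‖ = ‖v‖ := by
    rw [norm_eq_sqrt_real_inner, norm_eq_sqrt_real_inner, hg v hv v hv]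
  refine ⟨?_, ?_, ?_⟩
  · simp only [Finset.mem_image, forall_exists_index, and_imp]
    rintro _ v hv rfl
    rw [hnorm_map (hmem hv), hnorm v hv]
  · simp only [Finset.mem_image, forall_exists_index, and_imp]
    rintro _ v hv rfl _ w hw rfl hvw
    rw [hg v (hmem hv) w (hmem hw)]
    exact hangle v hv w hw fun h => hvw (h ▸ rfl)
  · rintro ⟨u, hu, huspan, hunot, hux⟩
    rw [coe_image, span_image] at huspan
    obtain ⟨u', hu', rfl⟩ := mem_map.1 huspan
    refine hsat ⟨u', ?_, hu', ?_, fun v hv => ?_⟩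
    · rwa [← hnorm_map hu']
    · rintro (h | h)
      · exact hunot (Or.inl (mem_image_of_mem g h))
      · refine hunot (Or.inr ?_)
        rw [Set.mem_neg, ← map_neg]
        exact mem_image_of_mem g h
    · rw [← hg u' hu' v (hmem hv)]
      exact hux (g v) (mem_image_of_mem g hv)

end Image

theorem exists_linearIsometry_euclideanSpace {V : Type*} [NormedAddCommGroup V]
    [InnerProductSpace ℝ V] [FiniteDimensional ℝ V] {n : ℕ} (h : finrank ℝ V ≤ n) :
    Nonempty (V →ₗᵢ[ℝ] EuclideanSpace ℝ (Fin n)) := by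
  let b := (stdOrthonormalBasis ℝ V).toBasis
  let f := b.constr ℝ fun i => EuclideanSpace.single (Fin.castLE h i) (1 : ℝ)
  have hf : Orthonormal ℝ (f ∘ b) := by
    convert EuclideanSpace.orthonormal_single.comp _ (Fin.castLE_injective h) using 1
    ext1 i
    simp [f]
  exact ⟨f.isometryOfOrthonormal (stdOrthonormalBasis ℝ V).orthonormal hf⟩

theorem IsSaturatedEquiangularSet.exists_euclideanSpace {X : Finset E} {α : ℝ}
    (hX : IsSaturatedEquiangularSet X α) {n : ℕ} (h : finrank ℝ (span ℝ (X : Set E)) ≤ n) :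
    ∃ Y : Finset (EuclideanSpace ℝ (Fin n)), Y.card = X.card ∧ IsSaturatedEquiangularSet Y α := by
  classical
  obtain ⟨f⟩ := exists_linearIsometry_euclideanSpace h
  obtain ⟨g, hg⟩ := LinearMap.exists_extend f.toLinearMap
  have hinner (v : E) (hv : v ∈ span ℝ (X : Set E)) (w : E) (hw : w ∈ span ℝ (X : Set E)) :
      ⟪g v, g w⟫_ℝ = ⟪v, w⟫_ℝ := by
    have hgv : g v = f ⟨v, hv⟩ := LinearMap.congr_fun hg ⟨v, hv⟩
    have hgw : g w = f ⟨w, hw⟩ := LinearMap.congr_fun hg ⟨w, hw⟩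
    rw [hgv, hgw, f.inner_map_map, coe_inner]
  exact ⟨X.image g, card_image_of_inner_map_map g hinner, hX.image g hinner⟩

namespace Saturated28

abbrev Idx := Fin 13 ⊕ Fin 13

def seidelA : Fin 13 → ℤ := ![0, 1, -1, 1, 1, -1, -1, -1, -1, 1, 1, -1, 1]

def seidelB : Fin 13 → ℤ := ![1, 1, 1, 1, -1, -1, 1, 1, -1, 1, -1, 1, 1]

def seidel : Matrix Idx Idx ℤ :=
  fromBlocks (circulant seidelA) (circulant seidelB) (circulant seidelB)ᵀ (-circulant seidelA)

def signVec : Idx → ℤ :=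
  Sum.elim ![-1, -1, 1, 1, 1, 1, 1, 1, 1, 1, -1, 1, 1] ![1, -1, 1, 1, 1, 1, 1, -1, 1, 1, 1, 1, -1]

theorem seidel_mul_self : seidel * seidel = 25 := by decide

theorem seidel_transpose : seidelᵀ = seidel := by decide

theorem seidel_apply_self : ∀ i, seidel i i = 0 := by decide

theorem abs_seidel_apply : ∀ i j, i ≠ j → |seidel i j| = 1 := by decide

theorem seidel_mulVec_one : seidel *ᵥ 1 = 5 • 1 := by decide

theorem seidel_mulVec_signVec : seidel *ᵥ signVec = 5 • signVec := by decide

theorem signVec_eq : ∀ i, signVec i = 1 ∨ signVec i = -1 := by decide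

theorem sum_signVec : ∑ i, signVec i = 14 := by decide

theorem signVec_dotProduct_self : signVec ⬝ᵥ signVec = 26 := by decide

theorem one_dotProduct_signVec : 1 ⬝ᵥ signVec = 14 :=
  (one_dotProduct signVec).trans sum_signVec

theorem abs_signVec (i : Idx) : |(signVec i : ℝ)| = 1 := by
  rcases signVec_eq i with h | h <;> simp [h]

theorem abs_sum_one_sub_signVec_mul_le {a : Idx → ℝ} (ha : ∀ i, |a i| = 1 / 5) :
    |∑ i, (1 - (signVec i : ℝ)) * a i| ≤ 12 / 5 := by
  have hsum : ∑ i, (1 - (signVec i : ℝ)) = 12 := by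
    rw [sum_sub_distrib]
    exact_mod_cast congrArg (fun n : ℤ => 26 - n) sum_signVec
  calc |∑ i, (1 - (signVec i : ℝ)) * a i| ≤ ∑ i, |(1 - (signVec i : ℝ)) * a i| :=
        abs_sum_le_sum_abs _ _
    _ = ∑ i, (1 - (signVec i : ℝ)) / 5 := by
        refine sum_congr rfl fun i _ => ?_
        rw [abs_mul, ha]
        rcases signVec_eq i with h | h <;> norm_num [h]
    _ = 12 / 5 := by rw [← sum_div, hsum]

theorem abs_sum_signVec_mul_div_ten_sub_ne {a : Idx → ℝ} (ha : ∀ i, |a i| = 1 / 5) {r : ℝ}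
    (hr : |r| = 12 / 25) (h₁ : |(∑ i, a i) / 10 + r| = 1 / 5) :
    |(∑ i, (signVec i : ℝ) * a i) / 10 - r| ≠ 1 / 5 := by
  intro h₂
  have hdiff := abs_sum_one_sub_signVec_mul_le ha
  rw [show ∑ i, (1 - (signVec i : ℝ)) * a i = ∑ i, a i - ∑ i, (signVec i : ℝ) * a i by
    rw [← sum_sub_distrib]
    exact sum_congr rfl fun i _ => by ring] at hdiff
  rcases abs_le.1 hdiff with ⟨hd₁, hd₂⟩
  rcases abs_eq (by norm_num : (0 : ℝ) ≤ 1 / 5) |>.1 h₁ with h₁ | h₁ <;>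
  rcases abs_eq (by norm_num : (0 : ℝ) ≤ 1 / 5) |>.1 h₂ with h₂ | h₂ <;>
  rcases abs_eq (by norm_num : (0 : ℝ) ≤ 12 / 25) |>.1 hr with hr | hr <;>
  linarith

theorem seidel_map_mul_self :
    seidel.map (Int.cast : ℤ → ℝ) * seidel.map (↑) = (25 : ℝ) • 1 := by
  change seidel.map (Int.castRingHom ℝ) * seidel.map (Int.castRingHom ℝ) = _
  rw [← Matrix.map_mul, seidel_mul_self]
  ext i j
  simp [Matrix.ofNat_apply, Matrix.one_apply, apply_ite]

noncomputable def gramMatrix : Matrix Idx Idx ℝ := 1 + (5 : ℝ)⁻¹ • seidel.map (↑)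

theorem gramMatrix_mul_self : gramMatrix * gramMatrix = (2 : ℝ) • gramMatrix := by
  simp only [gramMatrix, add_mul, mul_add, Matrix.smul_mul, Matrix.mul_smul, one_mul, mul_one,
    seidel_map_mul_self, smul_smul]
  module

theorem abs_gramMatrix_apply {i j : Idx} (hij : i ≠ j) : |gramMatrix i j| = 1 / 5 := by
  have : |(seidel i j : ℝ)| = 1 := by exact_mod_cast abs_seidel_apply i j hij
  simp [gramMatrix, hij, abs_mul, this]

theorem gramMatrix_mulVec {v : Idx → ℤ} (hv : seidel *ᵥ v = 5 • v) :
    gramMatrix *ᵥ (fun i => (v i : ℝ)) = (2 : ℝ) • fun i => (v i : ℝ) := by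
  have hS : seidel.map (↑) *ᵥ (fun i => (v i : ℝ)) = (5 : ℝ) • fun i => (v i : ℝ) := by
    ext i
    have := RingHom.map_mulVec (Int.castRingHom ℝ) seidel v i
    rw [hv] at this
    simpa [Function.comp_def] using this.symm
  rw [gramMatrix, add_mulVec, one_mulVec, smul_mulVec, hS, smul_smul]
  module

theorem gramMatrix_transpose : gramMatrixᵀ = gramMatrix := by
  rw [gramMatrix, transpose_add, transpose_smul, transpose_one, ← transpose_map, seidel_transpose]

theorem gramMatrix_apply_self (i : Idx) : gramMatrix i i = 1 := by
  simp [gramMatrix, seidel_apply_self]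

theorem sq_sqrt_twelve_div_five : (√12 / 5) ^ 2 = 12 / 25 := by
  rw [div_pow, Real.sq_sqrt (by norm_num)]
  norm_num

section Realization

variable {x : Idx → E}

theorem isTightFrame_of_gram_eq (hx : gram ℝ x = gramMatrix) : IsTightFrame x 2 :=
  isTightFrame_of_gram_mul_self (by rw [hx, gramMatrix_mul_self])

theorem norm_eq_one_of_gram_eq (hx : gram ℝ x = gramMatrix) (i : Idx) : ‖x i‖ = 1 := by
  have := congrFun (congrFun hx i) i
  rw [gram_apply, gramMatrix_apply_self, real_inner_self_eq_norm_sq] at this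
  exact (pow_eq_one_iff_of_nonneg (norm_nonneg _) two_ne_zero).1 this

theorem finrank_span_eq_of_gram_eq (hx : gram ℝ x = gramMatrix) :
    finrank ℝ (span ℝ (range x)) = 13 := by
  have := (isTightFrame_of_gram_eq hx).mul_finrank_span
  simp only [norm_eq_one_of_gram_eq hx, one_pow, sum_const, card_univ, Fintype.card_sum,
    Fintype.card_fin, nsmul_eq_mul] at this
  norm_num at this
  exact_mod_cast (by linarith : (finrank ℝ (span ℝ (range x)) : ℝ) = 13)

theorem inner_sum_of_gram_eq (hx : gram ℝ x = gramMatrix) {v : Idx → ℤ}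
    (hv : seidel *ᵥ v = 5 • v) (j : Idx) : ⟪x j, ∑ i, (v i : ℝ) • x i⟫_ℝ = 2 * v j := by
  have := congrFun (gramMatrix_mulVec hv) j
  rw [← hx] at this
  simp only [mulVec, dotProduct, gram_apply, Pi.smul_apply, smul_eq_mul] at this
  rw [inner_sum, ← this]
  exact sum_congr rfl fun i _ => by rw [real_inner_smul_right, mul_comm]

structure IsRealization (x : Idx → E) (e : E) : Prop where
  gram_eq : gram ℝ x = gramMatrix
  mem_orthogonal : e ∈ (span ℝ (range x))ᗮ
  norm_eq_one : ‖e‖ = 1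

noncomputable def extraLine (x : Idx → E) (e : E) (v : Idx → ℤ) (s : ℝ) : E :=
  (10 : ℝ)⁻¹ • ∑ i, (v i : ℝ) • x i + s • e

noncomputable def lines (x : Idx → E) (e : E) : Idx ⊕ Fin 2 → E :=
  Sum.elim x ![extraLine x e 1 (√12 / 5), extraLine x e signVec (-(√12 / 5))]

variable {e : E}

theorem IsRealization.inner_eq_zero (h : IsRealization x e) {w : E}
    (hw : w ∈ span ℝ (range x)) : ⟪w, e⟫_ℝ = 0 :=
  inner_right_of_mem_orthogonal hw h.mem_orthogonal

theorem IsRealization.inner_extraLine (h : IsRealization x e) {v : Idx → ℤ}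
    (hv : seidel *ᵥ v = 5 • v) (j : Idx) (s : ℝ) : ⟪x j, extraLine x e v s⟫_ℝ = v j / 5 := by
  rw [extraLine, inner_add_right, real_inner_smul_right, real_inner_smul_right,
    inner_sum_of_gram_eq h.gram_eq hv, h.inner_eq_zero (subset_span (mem_range_self j))]
  ring

theorem IsRealization.inner_extraLine_extraLine (h : IsRealization x e) (v : Idx → ℤ)
    {w : Idx → ℤ} (hw : seidel *ᵥ w = 5 • w) (s t : ℝ) :
    ⟪extraLine x e v s, extraLine x e w t⟫_ℝ = (v ⬝ᵥ w : ℤ) / 50 + s * t := by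
  have hmem (u : Idx → ℤ) : ∑ i, (u i : ℝ) • x i ∈ span ℝ (range x) :=
    sum_mem fun i _ => smul_mem _ _ (subset_span (mem_range_self i))
  have hsum : ⟪∑ i, (v i : ℝ) • x i, ∑ i, (w i : ℝ) • x i⟫_ℝ = 2 * (v ⬝ᵥ w : ℤ) := by
    simp only [sum_inner, real_inner_smul_left, inner_sum_of_gram_eq h.gram_eq hw, dotProduct,
      Int.cast_sum, Int.cast_mul, mul_sum]
    exact sum_congr rfl fun i _ => by ring
  have he (u : Idx → ℤ) : ⟪e, ∑ i, (u i : ℝ) • x i⟫_ℝ = 0 := by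
    rw [real_inner_comm]; exact h.inner_eq_zero (hmem u)
  simp only [extraLine, inner_add_left, inner_add_right, real_inner_smul_left,
    real_inner_smul_right, hsum, h.inner_eq_zero (hmem _), he, real_inner_self_eq_norm_sq,
    h.norm_eq_one]
  ring

theorem IsRealization.norm_extraLine (h : IsRealization x e) {v : Idx → ℤ}
    (hv : seidel *ᵥ v = 5 • v) (hvv : v ⬝ᵥ v = 26) {s : ℝ} (hs : s ^ 2 = 12 / 25) :
    ‖extraLine x e v s‖ = 1 := by
  rw [norm_eq_sqrt_real_inner, h.inner_extraLine_extraLine v hv, hvv, ← sq, hs]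
  norm_num

theorem IsRealization.norm_lines (h : IsRealization x e) (k : Idx ⊕ Fin 2) :
    ‖lines x e k‖ = 1 := by
  rcases k with i | m
  · exact norm_eq_one_of_gram_eq h.gram_eq i
  fin_cases m
  · exact h.norm_extraLine seidel_mulVec_one (by decide) sq_sqrt_twelve_div_five
  · exact h.norm_extraLine seidel_mulVec_signVec signVec_dotProduct_self
      (by rw [neg_sq, sq_sqrt_twelve_div_five])

theorem IsRealization.abs_inner_lines_inr (h : IsRealization x e) (i : Idx) (m : Fin 2) :
    |⟪x i, lines x e (.inr m)⟫_ℝ| = 1 / 5 := by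
  fin_cases m
  · simp [lines, h.inner_extraLine seidel_mulVec_one]
  · simp [lines, h.inner_extraLine seidel_mulVec_signVec, abs_div, abs_signVec]

theorem IsRealization.inner_lines_inr_zero_one (h : IsRealization x e) :
    ⟪lines x e (.inr 0), lines x e (.inr 1)⟫_ℝ = -(1 / 5) := by
  simp only [lines, Sum.elim_inr, Matrix.cons_val_zero, Matrix.cons_val_one,
    h.inner_extraLine_extraLine _ seidel_mulVec_signVec, one_dotProduct_signVec, mul_neg,
    ← sq, sq_sqrt_twelve_div_five]
  norm_num

theorem IsRealization.abs_inner_lines (h : IsRealization x e) {k l : Idx ⊕ Fin 2}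
    (hkl : k ≠ l) : |⟪lines x e k, lines x e l⟫_ℝ| = 1 / 5 := by
  rcases k with i | m <;> rcases l with j | m'
  · have := congrFun (congrFun h.gram_eq i) j
    rw [gram_apply] at this
    simpa [lines, this] using abs_gramMatrix_apply fun hij => hkl (congrArg Sum.inl hij)
  · exact h.abs_inner_lines_inr i m'
  · rw [real_inner_comm]
    exact h.abs_inner_lines_inr j m
  · fin_cases m <;> fin_cases m' <;> simp only [ne_eq, not_true_eq_false] at hkl
    · change |⟪lines x e (.inr 0), lines x e (.inr 1)⟫_ℝ| = 1 / 5
      rw [h.inner_lines_inr_zero_one]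
      norm_num
    · change |⟪lines x e (.inr 1), lines x e (.inr 0)⟫_ℝ| = 1 / 5
      rw [real_inner_comm, h.inner_lines_inr_zero_one]
      norm_num

theorem span_lines_le : span ℝ (range (lines x e)) ≤ span ℝ (range x) ⊔ span ℝ {e} := by
  have hextra (v : Idx → ℤ) (s : ℝ) : extraLine x e v s ∈ span ℝ (range x) ⊔ span ℝ {e} :=
    add_mem_sup (smul_mem _ _ (sum_mem fun i _ => smul_mem _ _ (subset_span (mem_range_self i))))
      (smul_mem _ _ (mem_span_singleton_self e))
  rw [span_le]
  rintro _ ⟨i | m, rfl⟩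
  · exact mem_sup_left (subset_span (mem_range_self i))
  · match m with
    | 0 => exact hextra _ _
    | 1 => exact hextra _ _

theorem IsRealization.finrank_span_lines_le (h : IsRealization x e) :
    finrank ℝ (span ℝ (range (lines x e))) ≤ 14 := by
  have : FiniteDimensional ℝ (span ℝ (range x)) :=
    FiniteDimensional.span_of_finite ℝ (finite_range x)
  have he : e ≠ 0 := norm_ne_zero_iff.1 (by rw [h.norm_eq_one]; exact one_ne_zero)
  calc finrank ℝ (span ℝ (range (lines x e)))
      ≤ finrank ℝ ↥(span ℝ (range x) ⊔ span ℝ {e}) := Submodule.finrank_mono span_lines_le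
    _ ≤ finrank ℝ (span ℝ (range x)) + finrank ℝ (span ℝ {e}) :=
        finrank_add_le_finrank_add_finrank _ _
    _ = 14 := by rw [finrank_span_eq_of_gram_eq h.gram_eq, finrank_span_singleton he]

theorem IsRealization.inner_add_smul_left (h : IsRealization x e) (w : E) (c : ℝ) (i : Idx) :
    ⟪w + c • e, x i⟫_ℝ = ⟪w, x i⟫_ℝ := by
  rw [inner_add_left, real_inner_smul_left, real_inner_comm (x i) e,
    h.inner_eq_zero (subset_span (mem_range_self i)), mul_zero, add_zero]

theorem IsRealization.inner_add_smul_extraLine (h : IsRealization x e) {w : E}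
    (hw : w ∈ span ℝ (range x)) (c : ℝ) (v : Idx → ℤ) (s : ℝ) :
    ⟪w + c • e, extraLine x e v s⟫_ℝ = (∑ i, (v i : ℝ) * ⟪w, x i⟫_ℝ) / 10 + s * c := by
  simp_rw [extraLine, inner_add_right, real_inner_smul_right, inner_sum, real_inner_smul_right,
    h.inner_add_smul_left, inner_add_left, real_inner_smul_left, h.inner_eq_zero hw,
    real_inner_self_eq_norm_sq, h.norm_eq_one]
  ring

theorem IsRealization.sq_eq_of_abs_inner_eq (h : IsRealization x e) {w : E}
    (hw : w ∈ span ℝ (range x)) {c : ℝ} (hnorm : ‖w + c • e‖ = 1)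
    (ha : ∀ i, |⟪w, x i⟫_ℝ| = 1 / 5) : c ^ 2 = 12 / 25 := by
  have hw_sq : ‖w‖ ^ 2 = 13 / 25 := by
    have hsq (i : Idx) : ⟪w, x i⟫_ℝ ^ 2 = 1 / 25 := by
      rw [← sq_abs, ha]
      norm_num
    have := (isTightFrame_of_gram_eq h.gram_eq).sum_inner_sq hw
    simp only [hsq, sum_const, card_univ, Fintype.card_sum, Fintype.card_fin,
      nsmul_eq_mul] at this
    norm_num at this
    linarith
  have hwe : ⟪w, c • e⟫_ℝ = 0 := by rw [real_inner_smul_right, h.inner_eq_zero hw, mul_zero]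
  have := norm_add_sq_eq_norm_sq_add_norm_sq_real hwe
  simp only [hnorm, norm_smul, h.norm_eq_one, mul_one, Real.norm_eq_abs,
    abs_mul_abs_self] at this
  nlinarith

theorem IsRealization.exists_abs_inner_lines_ne (h : IsRealization x e) {u : E}
    (hu : u ∈ span ℝ (range (lines x e))) (hnorm : ‖u‖ = 1) :
    ∃ k, |⟪u, lines x e k⟫_ℝ| ≠ 1 / 5 := by
  by_contra! hall
  obtain ⟨w, hw, _, hz, rfl⟩ := mem_sup.1 (span_lines_le hu)
  obtain ⟨c, rfl⟩ := mem_span_singleton.1 hz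
  have ha (i : Idx) : |⟪w, x i⟫_ℝ| = 1 / 5 := h.inner_add_smul_left w c i ▸ hall (.inl i)
  have hqc : |√12 / 5 * c| = 12 / 25 := by
    rw [← abs_of_pos (by norm_num : (0 : ℝ) < 12 / 25), ← sq_eq_sq_iff_abs_eq_abs, mul_pow,
      sq_sqrt_twelve_div_five, h.sq_eq_of_abs_inner_eq hw hnorm ha]
    norm_num
  have hy₁ := hall (.inr 0)
  have hy₂ := hall (.inr 1)
  simp only [lines, Sum.elim_inr, Matrix.cons_val_zero, Matrix.cons_val_one,
    h.inner_add_smul_extraLine hw, Pi.one_apply, Int.cast_one, one_mul, neg_mul,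
    ← sub_eq_add_neg] at hy₁ hy₂
  exact abs_sum_signVec_mul_div_ten_sub_ne ha hqc hy₁ hy₂

theorem IsRealization.card_image_lines [DecidableEq E] (h : IsRealization x e) :
    (Finset.univ.image (lines x e)).card = 28 := by
  rw [Finset.card_image_of_injective _ (injective_of_abs_inner_eq (by norm_num) h.norm_lines
    fun _ _ => h.abs_inner_lines)]
  simp

theorem IsRealization.isSaturatedEquiangularSet [DecidableEq E] (h : IsRealization x e) :
    IsSaturatedEquiangularSet (Finset.univ.image (lines x e)) (1 / 5) :=
  isSaturatedEquiangularSet_image_univ h.norm_lines (fun _ _ => h.abs_inner_lines)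
    fun _ hu hnorm => h.exists_abs_inner_lines_ne hu hnorm

end Realization

theorem exists_isRealization :
    ∃ (x : Idx → EuclideanSpace ℝ Idx) (e : EuclideanSpace ℝ Idx), IsRealization x e := by
  -- the rows of `gramMatrix / √2` have Gram matrix `gramMatrix * gramMatrixᵀ / 2 = gramMatrix`
  let x (i : Idx) : EuclideanSpace ℝ Idx := (√2)⁻¹ • WithLp.toLp 2 (gramMatrix i)
  have hx : gram ℝ x = gramMatrix := by
    ext i j
    have hij := congrFun (congrFun gramMatrix_mul_self i) j
    rw [mul_apply, Matrix.smul_apply, smul_eq_mul] at hij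
    have h2 : (√2)⁻¹ * (√2)⁻¹ = (2 : ℝ)⁻¹ := by
      rw [← mul_inv, Real.mul_self_sqrt zero_le_two]
    rw [gram_apply, real_inner_smul_left, real_inner_smul_right, ← mul_assoc, h2]
    simp only [PiLp.inner_apply, RCLike.inner_apply, conj_trivial]
    have hsymm (a b : Idx) : gramMatrix a b = gramMatrix b a :=
      congrFun (congrFun gramMatrix_transpose b) a
    rw [sum_congr rfl fun k _ => by rw [hsymm j k, mul_comm], hij]
    ring
  have hne : span ℝ (range x) ≠ ⊤ := by
    intro htop
    have := finrank_span_eq_of_gram_eq hx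
    rw [htop, finrank_top, finrank_euclideanSpace] at this
    simp at this
  obtain ⟨v, hv, hv0⟩ := exists_mem_ne_zero_of_ne_bot (mt orthogonal_eq_bot_iff.1 hne)
  exact ⟨x, ‖v‖⁻¹ • v, hx, smul_mem _ _ hv, norm_smul_inv_norm hv0⟩

end Saturated28

/-- There exists a saturated equiangular set of 28 lines in ℝ^14 with common
angle arccos(1/5): a set `X` of 28 unit vectors, pairwise non-parallel (which
follows from the angle condition), with `|⟪v,w⟫| = 1/5` for distinct `v, w ∈ X`,
such that no unit vector `u` in the span of `X`, other than the vectors of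
`X ∪ (-X)`, satisfies `|⟪u,x⟫| = 1/5` for all `x ∈ X`. -/
theorem saturated_equiangular_28_lines_dim_14 :
    ∃ X : Finset (EuclideanSpace ℝ (Fin 14)),
      X.card = 28 ∧
      (∀ v ∈ X, ‖v‖ = 1) ∧
      (∀ v ∈ X, ∀ w ∈ X, v ≠ w → |(inner ℝ v w : ℝ)| = 1 / 5) ∧
      ¬ ∃ u : EuclideanSpace ℝ (Fin 14),
          ‖u‖ = 1 ∧
          u ∈ Submodule.span ℝ (X : Set (EuclideanSpace ℝ (Fin 14))) ∧
          u ∉ (X : Set (EuclideanSpace ℝ (Fin 14))) ∪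
              (-(X : Set (EuclideanSpace ℝ (Fin 14)))) ∧
          (∀ x ∈ X, |(inner ℝ u x : ℝ)| = 1 / 5) := by
  classical
  obtain ⟨x, e, h⟩ := Saturated28.exists_isRealization
  obtain ⟨Y, hcard, hY⟩ := h.isSaturatedEquiangularSet.exists_euclideanSpace (n := 14) (by
    rw [coe_image, coe_univ, image_univ]
    exact h.finrank_span_lines_le)
  exact ⟨Y, hcard.trans h.card_image_lines, hY⟩
end

section
/- There exist 56 equiangular lines in R^18 with common angle arccos(1/5); that is, there is a set X of 56 unit vectors in R^18 such that |⟨v,w⟩| = 1/5 for all distinct v,w ∈ X. Consequently, the maximum number N(18) of equiangular lines in R^18 satisfies N(18) ≥ 56. -/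
/-- The maximum number `N(d)` of equiangular lines in `ℝ^d`: the supremum of
cardinalities of sets of unit vectors that are pairwise equiangular with some
common angle `arccos α`, `0 < α < 1` (so no two vectors are parallel and the
set represents that many distinct lines through the origin). -/
noncomputable def maxEquiangularLines (d : ℕ) : ℕ :=
  sSup {n : ℕ | ∃ (X : Finset (EuclideanSpace ℝ (Fin d))) (α : ℝ),
    0 < α ∧ α < 1 ∧ X.card = n ∧ (∀ v ∈ X, ‖v‖ = 1) ∧
    (∀ v ∈ X, ∀ w ∈ X, v ≠ w → |(inner ℝ v w : ℝ)| = α)}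

/-! The 56 lines are given by an explicit Gram matrix `G = I + S / 5`, where `S` is a Seidel matrix
of order 56 whose smallest eigenvalue `-5` has multiplicity `38 = 56 - 18`; thus `G` is positive
semidefinite of rank 18 and is the Gram matrix of 56 unit vectors in `ℝ¹⁸`. The vectors are read off
an exact factorisation `G = Wᵀ diag(D) W` with `D` positive rational and `W` an integer `18 × 56`
matrix in row echelon form, so that checking them reduces to integer arithmetic.

That `N(18)` is a finite supremum comes from the classical bound: for an equiangular set `X` in `E`
the tensors `x ⊗ x` have Gram matrix `(1 - α²) I + α² J`, which is positive definite, so they are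
linearly independent in `E ⊗ E` and `#X ≤ (dim E)²`. -/

open Module Matrix Finset
open scoped TensorProduct RealInnerProductSpace

section Equiangular

variable {E : Type*} [NormedAddCommGroup E] [InnerProductSpace ℝ E]

theorem linearIndependent_of_inner_eq_ite {ι : Type*} [Finite ι] [DecidableEq ι] {u : ι → E}
    {β : ℝ} (hβ0 : 0 ≤ β) (hβ1 : β < 1) (hu : ∀ i j, ⟪u i, u j⟫ = if i = j then 1 else β) :
    LinearIndependent ℝ u := by
  have hgram : gram ℝ u = (1 - β) • (1 : Matrix ι ι ℝ) + β • vecMulVec 1 1 := by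
    ext i j
    rw [gram_apply, hu]
    by_cases hij : i = j <;> simp [one_apply, hij]
  apply linearIndependent_of_posDef_gram
  rw [hgram]
  exact (PosDef.one.smul (sub_pos.2 hβ1)).add_posSemidef
    ((posSemidef_vecMulVec_self_star 1).smul hβ0)

theorem card_le_finrank_sq_of_equiangular [FiniteDimensional ℝ E] {X : Finset E} {α : ℝ}
    (hα0 : 0 < α) (hα1 : α < 1) (hX : ∀ v ∈ X, ‖v‖ = 1)
    (hXα : ∀ v ∈ X, ∀ w ∈ X, v ≠ w → |⟪v, w⟫| = α) :
    X.card ≤ finrank ℝ E ^ 2 := by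
  classical
  have hli : LinearIndependent ℝ fun x : X ↦ (x : E) ⊗ₜ[ℝ] (x : E) := by
    refine linearIndependent_of_inner_eq_ite (sq_nonneg α) (by nlinarith) fun x y ↦ ?_
    rw [TensorProduct.inner_tmul, ← sq]
    split_ifs with hxy
    · rw [hxy, real_inner_self_eq_norm_sq, hX _ y.2, one_pow, one_pow]
    · rw [← sq_abs, hXα _ x.2 _ y.2 (Subtype.coe_injective.ne hxy)]
  simpa [finrank_tensorProduct, sq] using hli.fintype_card_le_finrank

theorem exists_finset_of_equiangular_family {ι : Type*} [Fintype ι] {v : ι → E} {α : ℝ}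
    (hα : α ≠ 1) (hv : ∀ a, ‖v a‖ = 1) (hvα : ∀ a b, a ≠ b → |⟪v a, v b⟫| = α) :
    ∃ X : Finset E, X.card = Fintype.card ι ∧ (∀ x ∈ X, ‖x‖ = 1) ∧
      ∀ x ∈ X, ∀ y ∈ X, x ≠ y → |⟪x, y⟫| = α := by
  classical
  have hinj : Function.Injective v := fun a b hab ↦ by_contra fun hne ↦ hα <| by
    rw [← hvα a b hne, hab, real_inner_self_eq_norm_sq, hv, one_pow, abs_one]
  refine ⟨univ.image v, by rw [card_image_of_injective _ hinj, card_univ], ?_, ?_⟩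
  · simp [hv]
  · simp only [mem_image, mem_univ, true_and]
    rintro _ ⟨a, rfl⟩ _ ⟨b, rfl⟩ hab
    exact hvα a b (ne_of_apply_ne v hab)

end Equiangular

theorem le_maxEquiangularLines {d : ℕ} {X : Finset (EuclideanSpace ℝ (Fin d))} {α : ℝ}
    (hα0 : 0 < α) (hα1 : α < 1) (hX : ∀ v ∈ X, ‖v‖ = 1)
    (hXα : ∀ v ∈ X, ∀ w ∈ X, v ≠ w → |⟪v, w⟫| = α) :
    X.card ≤ maxEquiangularLines d := by
  refine le_csSup ⟨d ^ 2, ?_⟩ ⟨X, α, hα0, hα1, rfl, hX, hXα⟩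
  rintro _ ⟨Y, β, hβ0, hβ1, rfl, hY, hYβ⟩
  simpa using card_le_finrank_sq_of_equiangular hβ0 hβ1 hY hYβ

section ScaledColumn

variable {κ ι : Type*} [Fintype κ]

noncomputable def scaledColumn (D : κ → ℝ) (W : κ → ι → ℝ) (a : ι) : EuclideanSpace ℝ κ :=
  WithLp.toLp 2 fun k ↦ √(D k) * W k a

theorem inner_scaledColumn {D : κ → ℝ} (hD : ∀ k, 0 ≤ D k) (W : κ → ι → ℝ) (a b : ι) :
    ⟪scaledColumn D W a, scaledColumn D W b⟫ = ∑ k, D k * W k a * W k b := by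
  simp only [scaledColumn, PiLp.inner_apply, RCLike.inner_apply, conj_trivial]
  refine sum_congr rfl fun k _ ↦ ?_
  linear_combination (W k a * W k b) * Real.mul_self_sqrt (hD k)

end ScaledColumn

-- `lines56Weight / (5 * lines56Scale)` and `lines56Coord` are the `D` and `W` of the header.
def lines56Weight : Fin 18 → ℤ :=
  ![93830550349536, 15638425058256, 11170303613040, 8377727709780, 1777093756620, 1015482146640, 657076683120, 1839814712736, 665464896096, 34659630005, 651601044094, 977401566141, 3909606264564, 19646262636, 26489342880, 343785602160, 261512124720, 384945847587840]

def lines56Coord : Fin 18 → Fin 56 → ℤ :=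
  ![![5, 1, 1, 1, 1, 1, 1, -1, 1, 1, -1, 1, 1, -1, 1, 1, 1, 1, -1, 1, -1, 1, -1, 1, 1, 1, 1, -1, -1, 1, 1, -1, 1, 1, -1, 1, -1, 1, 1, 1, -1, 1, -1, 1, 1, -1, 1, 1, 1, -1, -1, 1, -1, -1, -1, -1],
    ![0, 12, 2, 2, 2, -3, 2, 3, 2, 2, 3, 2, -3, 3, 2, 2, 2, -3, 3, -3, 3, -3, -2, 2, 2, -3, 2, 3, 3, 2, 2, -2, 2, -3, -2, -3, -2, 2, -3, 2, 3, -3, 3, -3, 2, -2, -3, 2, -3, 3, -2, 2, -2, -2, -2, 3],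
    ![0, 0, 14, 2, -4, 3, 2, 3, -4, 2, 3, 2, -3, 3, 2, 2, 2, -3, -3, 3, 3, -3, 4, 2, -4, 3, 2, 3, 3, 2, -4, -2, -4, -3, 4, -3, -2, 2, 3, 2, -3, 3, 3, 3, -4, -2, -3, -4, 3, -3, 4, -4, 4, 4, -2, -3],
    ![0, 0, 0, 16, 3, 3, -5, 3, -4, 2, -4, 2, 4, 3, 2, -5, -5, 4, 4, 3, 3, -3, 4, 2, 3, -4, 2, -4, 3, -5, -4, 5, 3, 4, 4, -3, -2, 2, 3, 2, 4, -4, 3, 3, -4, 5, 4, -4, 3, -3, -3, 3, -3, 4, -2, -3],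
    ![0, 0, 0, 0, 33, 9, 9, 9, 4, 6, -4, -10, 4, 9, 6, 9, -7, 4, 4, -7, -7, 7, -4, -10, 1, 12, 6, 12, 9, 9, -12, 7, 1, -12, 12, 7, -6, 6, 9, -10, 4, 12, -7, -7, 4, 7, 4, 4, -7, 7, -1, 1, -1, -4, -6, -9],
    ![0, 0, 0, 0, 0, 42, 9, 9, 15, -16, 18, 12, 4, 9, -16, 9, -7, 4, 15, 4, 15, 7, -15, 12, 12, 1, -16, -10, 9, -13, -1, 7, -10, 10, 1, 7, -6, -16, -2, 12, 15, 1, -7, 4, 15, 7, -18, -7, 4, -4, -12, -10, 10, 7, -6, 2],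
    ![0, 0, 0, 0, 0, 0, 51, 9, 1, -16, 4, 12, -10, 9, -16, -5, 7, 18, 15, 18, -13, 7, -1, 12, -16, 1, 12, 4, -19, 1, 13, -7, -10, -4, -13, 7, 22, 12, -16, 12, 15, 1, 21, -10, -27, -7, 24, 7, -10, 10, -12, -10, -18, 21, -6, -12],
    ![0, 0, 0, 0, 0, 0, 0, 30, 9, 9, 2, -11, 12, -4, 9, 6, 12, -8, -1, 9, 2, -5, 8, -11, -8, 9, 6, 2, -1, -8, -2, 5, -5, 15, -15, -5, -6, -11, -8, 6, -1, 9, 2, -5, -5, 5, -5, 12, -5, -12, -6, -5, 8, 2, 14, -6],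
    ![0, 0, 0, 0, 0, 0, 0, 0, 47, 17, 6, 17, 6, -12, 17, -2, 6, 16, 7, -13, 16, 5, 4, 17, 6, 7, -12, 16, -13, 16, 4, 15, -15, 5, 5, -25, 22, 27, -4, -22, 7, 7, -4, 25, -5, 15, -5, -4, -5, -16, 2, -15, -16, -4, 12, 12],
    ![0, 0, 0, 0, 0, 0, 0, 0, 0, 192, 112, 98, 18, -36, -90, -100, 18, -46, -26, 102, 48, -32, 12, -43, 65, 21, 11, 1, 55, 1, -35, 45, 49, -79, -79, 19, 113, -13, 35, -19, 115, 21, -59, -113, 79, 45, 79, 35, 79, -1, 53, -92, -48, -12, 36, -58],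
    ![0, 0, 0, 0, 0, 0, 0, 0, 0, 0, 40, -10, 30, 12, 6, -16, 6, 2, 10, 6, -12, 28, 24, 11, 11, 15, -7, 7, 1, -17, 19, -21, -5, -1, -1, -11, -1, -7, 29, 11, -11, -21, 19, 1, 1, 15, 1, -19, -23, 17, 11, 16, 12, -24, 12, -22],
    ![0, 0, 0, 0, 0, 0, 0, 0, 0, 0, 0, 30, 30, 20, 2, -4, 14, 6, 10, 2, -8, -8, -4, -13, -1, -5, -11, -9, 17, 7, 11, 11, -17, -9, -9, 21, -9, -3, -11, -21, -11, 19, 19, 9, 9, -13, 9, -11, -7, -7, 19, 4, 8, 4, -4, 10],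
    ![0, 0, 0, 0, 0, 0, 0, 0, 0, 0, 0, 0, 0, 16, -7, 7, -7, -9, -5, -7, 9, 9, 7, -7, -7, -5, 9, -9, -7, 9, 7, 7, 0, 2, 2, 2, 2, -6, -8, 8, -8, -8, -8, 8, 8, 10, 8, 3, 1, 1, 3, 3, 1, 3, 1, -6],
    ![0, 0, 0, 0, 0, 0, 0, 0, 0, 0, 0, 0, 0, 0, 199, 57, -17, 57, 125, 199, 199, 199, 57, 79, -137, 5, -137, -63, 79, 79, -63, -63, 136, 62, 62, 62, 62, -66, 8, 8, 8, 8, 8, 8, 8, -66, 8, 133, -9, -9, 133, 13, -129, 13, 87, 70],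
    ![0, 0, 0, 0, 0, 0, 0, 0, 0, 0, 0, 0, 0, 0, 0, 178, 111, 178, -67, 0, 0, 0, 178, -71, 40, -138, 40, 107, -71, -71, 107, 107, 107, 40, 40, 40, 40, -49, 18, 18, 18, 18, 18, 18, 18, -49, 18, -49, 129, 129, -49, -120, 58, -120, -53, 58],
    ![0, 0, 0, 0, 0, 0, 0, 0, 0, 0, 0, 0, 0, 0, 0, 0, 46, 0, 46, 0, 0, 0, 0, -19, 27, 27, 27, -19, -19, -19, -19, -19, -19, 27, 27, 27, 27, 27, -19, -19, -19, -19, -19, -19, -19, 27, -19, 27, 27, 27, 27, 8, 8, 8, -38, 8],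
    ![0, 0, 0, 0, 0, 0, 0, 0, 0, 0, 0, 0, 0, 0, 0, 0, 0, 0, 0, 0, 0, 0, 0, 39, 39, 39, 39, 39, 39, 39, 39, 39, 39, 39, 39, 39, 39, -7, -7, -7, -7, -7, -7, -7, -7, -7, -7, -7, -7, -7, -7, 32, 32, 32, 32, 32],
    ![0, 0, 0, 0, 0, 0, 0, 0, 0, 0, 0, 0, 0, 0, 0, 0, 0, 0, 0, 0, 0, 0, 0, 0, 0, 0, 0, 0, 0, 0, 0, 0, 0, 0, 0, 0, 0, 1, 1, 1, 1, 1, 1, 1, 1, 1, 1, 1, 1, 1, 1, 1, 1, 1, 1, 1]]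

def lines56Scale : ℤ := 469152751747680

def lines56Gram (a b : Fin 56) : ℤ := ∑ k, lines56Weight k * lines56Coord k a * lines56Coord k b

theorem lines56Gram_self : ∀ a, lines56Gram a a = 5 * lines56Scale := by
  decide +kernel

theorem abs_lines56Gram_of_ne : ∀ a b, a ≠ b → |lines56Gram a b| = lines56Scale := by
  decide +kernel

noncomputable def lines56 : Fin 56 → EuclideanSpace ℝ (Fin 18) :=
  scaledColumn (fun k ↦ lines56Weight k / (5 * lines56Scale)) fun k a ↦ lines56Coord k a

theorem inner_lines56 (a b : Fin 56) :
    ⟪lines56 a, lines56 b⟫ = lines56Gram a b / (5 * lines56Scale) := by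
  have hweight : ∀ k, (0 : ℝ) ≤ lines56Weight k / (5 * lines56Scale) := by
    have hpos : ∀ k, 0 ≤ lines56Weight k := by decide +kernel
    exact fun k ↦ div_nonneg (by exact_mod_cast hpos k) (by norm_num [lines56Scale])
  rw [lines56, inner_scaledColumn hweight, lines56Gram]
  push_cast
  rw [sum_div]
  exact sum_congr rfl fun k _ ↦ by ring

theorem norm_lines56 (a : Fin 56) : ‖lines56 a‖ = 1 := by
  rw [norm_eq_sqrt_real_inner, inner_lines56, lines56Gram_self]
  norm_num [lines56Scale]

theorem abs_inner_lines56 {a b : Fin 56} (hab : a ≠ b) : |⟪lines56 a, lines56 b⟫| = 1 / 5 := by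
  rw [inner_lines56, abs_div, ← Int.cast_abs, abs_lines56Gram_of_ne a b hab]
  norm_num [lines56Scale]

/-- There exist 56 equiangular lines in `ℝ^18` with common angle `arccos (1/5)`;
consequently `N(18) ≥ 56`. -/
theorem equiangular_56_lines_dim_18 :
    (∃ X : Finset (EuclideanSpace ℝ (Fin 18)),
      X.card = 56 ∧
      (∀ v ∈ X, ‖v‖ = 1) ∧
      (∀ v ∈ X, ∀ w ∈ X, v ≠ w → |(inner ℝ v w : ℝ)| = 1 / 5)) ∧
    56 ≤ maxEquiangularLines 18 := by
  obtain ⟨X, hcard, hX, hXα⟩ :=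
    exists_finset_of_equiangular_family (by norm_num) norm_lines56 fun _ _ ↦ abs_inner_lines56
  rw [Fintype.card_fin] at hcard
  exact ⟨⟨X, hcard, hX, hXα⟩, hcard ▸ le_maxEquiangularLines (by norm_num) (by norm_num) hX hXα⟩
end

section
/- There exist 90 unit vectors v_1, …, v_90 in R^24, pairwise satisfying |⟨v_i, v_j⟩| = 1/5 for i ≠ j, such that every v_i is orthogonal to each of the four vectors e_1 − e_2, c = 4e_1 + Σ_{i=1}^{24} e_i, c_1 = e_2 + e_3 + e_10 + e_12 + e_13 + e_14 + e_21 + e_24, and c_2 = e_2 + e_3 + e_6 + e_7 + e_18 + e_19 + e_22 + e_23. In particular, these 90 vectors lie in a 20-dimensional subspace of R^24 and form 90 equiangular lines in R^20 with angle arccos(1/5). -/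
/-- The standard basis vector `e_i` of `ℝ^24` (0-indexed). -/
noncomputable def stdBasisR24 (i : Fin 24) : EuclideanSpace ℝ (Fin 24) :=
  EuclideanSpace.single i 1

/-- The vector `c = 4 e₁ + ∑_{i=1}^{24} e_i`. -/
noncomputable def cVec : EuclideanSpace ℝ (Fin 24) :=
  (4 : ℝ) • stdBasisR24 0 + ∑ i, stdBasisR24 i

/-- The vector `c₁ = e₂ + e₃ + e₁₀ + e₁₂ + e₁₃ + e₁₄ + e₂₁ + e₂₄`. -/
noncomputable def c1Vec : EuclideanSpace ℝ (Fin 24) :=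
  stdBasisR24 1 + stdBasisR24 2 + stdBasisR24 9 + stdBasisR24 11 +
    stdBasisR24 12 + stdBasisR24 13 + stdBasisR24 20 + stdBasisR24 23

/-- The vector `c₂ = e₂ + e₃ + e₆ + e₇ + e₁₈ + e₁₉ + e₂₂ + e₂₃`. -/
noncomputable def c2Vec : EuclideanSpace ℝ (Fin 24) :=
  stdBasisR24 1 + stdBasisR24 2 + stdBasisR24 5 + stdBasisR24 6 +
    stdBasisR24 17 + stdBasisR24 18 + stdBasisR24 21 + stdBasisR24 22

/-! The lines come from the Leech lattice. In its standard integral coordinates put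
`c = (5, 1, …, 1)`; for a minimal vector `x` (norm 32) with `⟪x, c⟫ = 24`, the vector `2x - c` has
seven coordinates `-3` and seventeen coordinates `1`, hence squared norm 80. The 90 of them chosen
below are orthogonal to `e₁ - e₂`, `c`, `c₁`, `c₂` and have pairwise inner products `±16`, so after
normalization `|⟪vᵢ, vⱼ⟫| = 16 / 80 = 1 / 5`. The four constraint vectors are linearly independent,
so they cut out a 20-dimensional subspace. All integer identities are checked by evaluation. -/

open scoped RealInnerProductSpace
open Submodule Module

section
variable {𝕜 E : Type*} [RCLike 𝕜] [NormedAddCommGroup E] [InnerProductSpace 𝕜 E]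

theorem mem_orthogonal_span_range_iff {ι : Type*} {u : ι → E} {v : E} :
    v ∈ (span 𝕜 (Set.range u))ᗮ ↔ ∀ i, inner 𝕜 (u i) v = 0 := by
  rw [← span_singleton_le_iff_mem, ← isOrtho_iff_le, isOrtho_comm, isOrtho_span]
  simp

theorem finrank_orthogonal_span_range {ι : Type*} [Fintype ι] [FiniteDimensional 𝕜 E] {u : ι → E}
    (hu : LinearIndependent 𝕜 u) :
    finrank 𝕜 (span 𝕜 (Set.range u))ᗮ = finrank 𝕜 E - Fintype.card ι := by
  have := (span 𝕜 (Set.range u)).finrank_add_finrank_orthogonal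
  rw [finrank_span_eq_card hu] at this
  omega
end

section
variable {E : Type*} [NormedAddCommGroup E] [InnerProductSpace ℝ E]

theorem inner_inv_sqrt_smul_inv_sqrt_smul (x y : E) {a : ℝ} (ha : 0 ≤ a) :
    ⟪(√a)⁻¹ • x, (√a)⁻¹ • y⟫ = ⟪x, y⟫ / a := by
  rw [real_inner_smul_left, real_inner_smul_right, ← mul_assoc, ← mul_inv, Real.mul_self_sqrt ha,
    inv_mul_eq_div]

theorem norm_inv_sqrt_smul_of_inner_self_eq {x : E} {a : ℝ} (ha : 0 < a) (hx : ⟪x, x⟫ = a) :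
    ‖(√a)⁻¹ • x‖ = 1 := by
  rw [← pow_left_inj₀ (norm_nonneg _) zero_le_one two_ne_zero, one_pow,
    ← real_inner_self_eq_norm_sq, inner_inv_sqrt_smul_inv_sqrt_smul x x ha.le, hx, div_self ha.ne']
end

section
variable {ι : Type*}

def castVec : (ι → ℤ) →+ EuclideanSpace ℝ ι where
  toFun x := WithLp.toLp 2 fun k => (x k : ℝ)
  map_zero' := by ext; simp
  map_add' x y := by ext; simp

theorem inner_castVec [Fintype ι] (x y : ι → ℤ) :
    ⟪castVec x, castVec y⟫ = ((x ⬝ᵥ y : ℤ) : ℝ) := by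
  simp [castVec, PiLp.inner_apply, dotProduct, mul_comm]

theorem castVec_single [DecidableEq ι] (i : ι) :
    castVec (Pi.single i 1) = EuclideanSpace.single i 1 := by
  ext k
  by_cases h : k = i <;> simp [castVec, h]

theorem linearIndependent_castVec_of_det_ne_zero [Fintype ι] {κ : Type*} [Fintype κ]
    [DecidableEq κ]
    (u : κ → ι → ℤ) (p : κ → ι) (h : (Matrix.of fun i j => u i (p j)).det ≠ 0) :
    LinearIndependent ℝ (castVec ∘ u) := by
  let A : Matrix κ κ ℝ := Matrix.of fun i j => (u i (p j) : ℝ)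
  have hA : A.det ≠ 0 := by
    rwa [show A = (Int.castRingHom ℝ).mapMatrix (Matrix.of fun i j => u i (p j)) from rfl,
      ← RingHom.map_det, eq_intCast, Int.cast_ne_zero]
  refine .of_comp (LinearMap.funLeft ℝ ℝ p ∘ₗ (WithLp.linearEquiv 2 ℝ (ι → ℝ)).toLinearMap) ?_
  exact Matrix.linearIndependent_rows_of_det_ne_zero hA
end

def signVec (m : ℕ) (k : Fin 24) : ℤ := if m.testBit k then -3 else 1
def maskL : List ℕ := [204956, 4722972, 2116636, 8405420, 581708, 5276812, 2196236, 9241612, 606772, 103508, 264084, 11042964, 1229076, 560420, 1638852, 676996, 379012, 4285700, 133944, 10555448, 5267512, 12847256, 2892312, 1446936, 1085800, 1376936, 2140328, 13140520, 809000, 4203464, 1198280, 11012424, 298568, 725576, 12604488, 3220552, 10618504, 2257160, 13828360, 4860936, 4567048, 11845640, 8439920, 10223920, 3180080, 338992, 700464, 8524240, 2165456, 1351888, 5246288, 157264, 3690576, 13181008, 5898896, 6304912, 14697232, 2398480, 8880656, 4413456, 94432, 8456032, 2626464, 1189280, 4214432, 8688800, 9111712, 320288, 3229984, 5837856, 11035680,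 9192128, 4757696, 800064, 239936, 5358144, 10126400, 5525888, 10822016, 3935360, 3379328, 12771456, 4364032, 5049088, 8801536, 7905536, 2446848, 2804224, 14781440, 2056192]

def dInt : Fin 24 → ℤ := Pi.single 0 1 - Pi.single 1 1

def cInt : Fin 24 → ℤ := (4 : ℤ) • Pi.single 0 1 + ∑ i, Pi.single i 1

def c1Int : Fin 24 → ℤ :=
  Pi.single 1 1 + Pi.single 2 1 + Pi.single 9 1 + Pi.single 11 1 +
    Pi.single 12 1 + Pi.single 13 1 + Pi.single 20 1 + Pi.single 23 1

def c2Int : Fin 24 → ℤ :=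
  Pi.single 1 1 + Pi.single 2 1 + Pi.single 5 1 + Pi.single 6 1 +
    Pi.single 17 1 + Pi.single 18 1 + Pi.single 21 1 + Pi.single 22 1

def constraints : Fin 4 → Fin 24 → ℤ := ![dInt, cInt, c1Int, c2Int]

theorem castVec_dInt : castVec dInt = stdBasisR24 0 - stdBasisR24 1 := by
  simp [dInt, stdBasisR24, castVec_single]

theorem castVec_cInt : castVec cInt = cVec := by
  rw [cInt, cVec, map_add, map_zsmul, map_sum, ← Int.cast_smul_eq_zsmul ℝ]
  simp [stdBasisR24, castVec_single]

theorem castVec_c1Int : castVec c1Int = c1Vec := by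
  simp [c1Int, c1Vec, stdBasisR24, castVec_single]

theorem castVec_c2Int : castVec c2Int = c2Vec := by
  simp [c2Int, c2Vec, stdBasisR24, castVec_single]

-- On these coordinates the minor is the identity matrix except for the row of `cInt`.
theorem linearIndependent_constraints : LinearIndependent ℝ (castVec ∘ constraints) :=
  linearIndependent_castVec_of_det_ne_zero constraints ![0, 3, 9, 5] (by decide +kernel)

theorem signVec_dotProduct_self : ∀ m ∈ maskL, signVec m ⬝ᵥ signVec m = 80 := by
  decide +kernel

theorem pairwise_abs_signVec_dotProduct :
    maskL.Pairwise fun m m' => |signVec m ⬝ᵥ signVec m'| = 16 := by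
  decide +kernel

theorem signVec_dotProduct_constraints : ∀ m ∈ maskL, ∀ t, signVec m ⬝ᵥ constraints t = 0 := by
  decide +kernel

noncomputable def lineVec (i : Fin maskL.length) : EuclideanSpace ℝ (Fin 24) :=
  (√80)⁻¹ • castVec (signVec (maskL.get i))

theorem norm_lineVec (i : Fin maskL.length) : ‖lineVec i‖ = 1 :=
  norm_inv_sqrt_smul_of_inner_self_eq (by norm_num) <| by
    rw [inner_castVec, signVec_dotProduct_self _ (List.get_mem _ _)]
    norm_num

theorem abs_inner_lineVec {i j : Fin maskL.length} (hij : i ≠ j) :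
    |⟪lineVec i, lineVec j⟫| = 1 / 5 := by
  have h16 : |signVec (maskL.get i) ⬝ᵥ signVec (maskL.get j)| = 16 := by
    rcases lt_or_gt_of_ne hij with h | h
    · exact pairwise_abs_signVec_dotProduct.rel_get_of_lt h
    · rw [dotProduct_comm]
      exact pairwise_abs_signVec_dotProduct.rel_get_of_lt h
  rw [lineVec, lineVec, inner_inv_sqrt_smul_inv_sqrt_smul _ _ (by norm_num), inner_castVec, abs_div,
    ← Int.cast_abs, h16]
  norm_num

theorem inner_lineVec_constraints (i : Fin maskL.length) (t : Fin 4) :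
    ⟪lineVec i, castVec (constraints t)⟫ = 0 := by
  rw [lineVec, real_inner_smul_left, inner_castVec,
    signVec_dotProduct_constraints _ (List.get_mem _ _), Int.cast_zero, mul_zero]

/-- There exist 90 unit vectors in `ℝ^24`, pairwise equiangular with angle
`arccos (1/5)`, each orthogonal to `e₁ - e₂`, `c`, `c₁` and `c₂`; in
particular they lie in a 20-dimensional subspace of `ℝ^24` and form 90
equiangular lines in `ℝ^20`. -/
theorem equiangular_90_lines_in_R24 :
    ∃ v : Fin 90 → EuclideanSpace ℝ (Fin 24),
      (∀ i, ‖v i‖ = 1) ∧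
      (∀ i j, i ≠ j → |(inner ℝ (v i) (v j) : ℝ)| = 1 / 5) ∧
      (∀ i, (inner ℝ (v i) (stdBasisR24 0 - stdBasisR24 1) : ℝ) = 0) ∧
      (∀ i, (inner ℝ (v i) cVec : ℝ) = 0) ∧
      (∀ i, (inner ℝ (v i) c1Vec : ℝ) = 0) ∧
      (∀ i, (inner ℝ (v i) c2Vec : ℝ) = 0) ∧
      ∃ W : Submodule ℝ (EuclideanSpace ℝ (Fin 24)),
        Module.finrank ℝ W = 20 ∧ ∀ i, v i ∈ W := by
  refine ⟨lineVec, norm_lineVec, fun i j => abs_inner_lineVec, fun i => ?_, fun i => ?_,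
    fun i => ?_, fun i => ?_, (span ℝ (Set.range (castVec ∘ constraints)))ᗮ, ?_, fun i => ?_⟩
  · rw [← castVec_dInt]; exact inner_lineVec_constraints i 0
  · rw [← castVec_cInt]; exact inner_lineVec_constraints i 1
  · rw [← castVec_c1Int]; exact inner_lineVec_constraints i 2
  · rw [← castVec_c2Int]; exact inner_lineVec_constraints i 3
  · rw [finrank_orthogonal_span_range linearIndependent_constraints, finrank_euclideanSpace,
      Fintype.card_fin, Fintype.card_fin]
  · refine mem_orthogonal_span_range_iff.2 fun t => ?_
    rw [real_inner_comm]
    exact inner_lineVec_constraints i t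
end
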